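/- arXiv:2306.03338 — 3 statements merged into one kernel-verified Lean document; each statement's English description precedes it below -/
import Mathlib

section
/- Let s and t be coprime positive integers and n, m integers with 0 < n < s and 0 < m < t. For every positive integer N, Σ_{k=0}^{N−1} ( exp( πi(2stk − nt − ms)²/(2stN) ) − exp( πi(2stk + nt − ms)²/(2stN) ) ) = 0. -/
open Complex Finset

/-!
Write `A = 2stk − nt − ms` and `B = 2stj + nt − ms`. Then
`A² − B² = 4st (s(k − j) − n) (t(k + j) − m)`, and `exp(πi x² / 2stN)` only depends on `x²`
modulo `4stN`, so the `k`-th term of the first sum equals the `j`-th term of the second as soon as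
`N ∣ (s(k − j) − n)(t(k + j) − m)`. Split `N = N₁N₂` with `N₁, N₂` coprime, `N₁` prime to `s` and
`N₂` prime to `t`. Under `ℤ/N ≅ ℤ/N₁ × ℤ/N₂` the map `k ↦ j` given by `k − n/s` on the first factor
and `m/t − k` on the second is a permutation of `ℤ/N` killing the first factor mod `N₁` and the
second mod `N₂`, so the two sums are rearrangements of each other.
-/

theorem Nat.exists_coprime_mul_eq_of_coprime {s t : ℕ} (hst : s.Coprime t) {N : ℕ} (hN : N ≠ 0) :
    ∃ N₁ N₂, N₁ * N₂ = N ∧ N₁.Coprime N₂ ∧ N₁.Coprime s ∧ N₂.Coprime t := by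
  induction N using Nat.strong_induction_on with
  | _ N ih =>
  by_cases hNs : N.Coprime s
  · exact ⟨N, 1, mul_one N, N.coprime_one_right, hNs, t.coprime_one_left⟩
  obtain ⟨g, hgN, hgs, hg⟩ : ∃ g, g ∣ N ∧ g ∣ s ∧ 1 < g :=
    ⟨N.gcd s, N.gcd_dvd_left s, N.gcd_dvd_right s,
      lt_of_le_of_ne (Nat.gcd_pos_of_pos_left s (Nat.pos_of_ne_zero hN)) (Ne.symm hNs)⟩
  obtain ⟨N', rfl⟩ := hgN
  have hN' : N' ≠ 0 := right_ne_zero_of_mul hN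
  obtain ⟨N₁, N₂, rfl, h12, h1, h2⟩ := ih N' (lt_mul_left (Nat.pos_of_ne_zero hN') hg) hN'
  exact ⟨N₁, N₂ * g, by ring, h12.mul_right (h1.coprime_dvd_right hgs), h1,
    h2.mul_left (hst.coprime_dvd_left hgs)⟩

theorem RingEquiv.exists_perm_mul_eq_zero {R R₁ R₂ : Type*} [CommRing R] [CommRing R₁]
    [CommRing R₂] (e : R ≃+* R₁ × R₂) {s t : R} (hs : IsUnit (e s).1) (ht : IsUnit (e t).2)
    (n m : R) : ∃ σ : Equiv.Perm R, ∀ z, (s * (z - σ z) - n) * (t * (z + σ z) - m) = 0 := by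
  obtain ⟨u, hu⟩ := hs.exists_left_inv
  obtain ⟨v, hv⟩ := ht.exists_left_inv
  let τ : Equiv.Perm (R₁ × R₂) := (Equiv.addRight (-(u * (e n).1))).prodCongr
    ((Equiv.neg R₂).trans (Equiv.addRight (v * (e m).2)))
  refine ⟨e.toEquiv.trans (τ.trans e.symm.toEquiv), fun z => e.injective ?_⟩
  have h₁ : (e s).1 * (u * (e n).1) = (e n).1 := by linear_combination (e n).1 * hu
  have h₂ : (e t).2 * (v * (e m).2) = (e m).2 := by linear_combination (e m).2 * hv
  ext <;> simp [τ, h₁, h₂]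

theorem ZMod.exists_perm_mul_eq_zero {N : ℕ} [NeZero N] {s t : ℤ} (hst : IsCoprime s t)
    (n m : ℤ) :
    ∃ σ : Equiv.Perm (ZMod N), ∀ z, ((s : ZMod N) * (z - σ z) - n) * (t * (z + σ z) - m) = 0 := by
  obtain ⟨N₁, N₂, rfl, h12, h1, h2⟩ := Nat.exists_coprime_mul_eq_of_coprime
    (Int.isCoprime_iff_nat_coprime.mp hst) (NeZero.ne N)
  apply (ZMod.chineseRemainder h12).exists_perm_mul_eq_zero <;>
    simpa [ZMod.coe_int_isUnit_iff_isCoprime, Int.isCoprime_iff_nat_coprime]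

theorem ZMod.sum_val_eq_sum_range {M : Type*} [AddCommMonoid M] (N : ℕ) [NeZero N] (f : ℕ → M) :
    ∑ z : ZMod N, f z.val = ∑ k ∈ range N, f k := by
  obtain ⟨N, rfl⟩ := Nat.exists_eq_succ_of_ne_zero (NeZero.ne N)
  exact Fin.sum_univ_eq_sum_range f _

theorem Complex.exp_pi_mul_I_mul_sq_div_eq_of_dvd {D A B : ℤ} (h : 2 * D ∣ A ^ 2 - B ^ 2) :
    exp (Real.pi * I * (A : ℂ) ^ 2 / D) = exp (Real.pi * I * (B : ℂ) ^ 2 / D) := by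
  obtain ⟨q, hq⟩ := h
  rcases eq_or_ne D 0 with rfl | hD
  · simp
  have hD' : (D : ℂ) ≠ 0 := Int.cast_ne_zero.mpr hD
  have hq' : (A : ℂ) ^ 2 = B ^ 2 + 2 * D * q := by
    rw [← sub_eq_iff_eq_add']; exact_mod_cast hq
  rw [show Real.pi * I * (A : ℂ) ^ 2 / D = Real.pi * I * B ^ 2 / D + q * (2 * Real.pi * I) by
    rw [hq']; field_simp, exp_add, exp_int_mul_two_pi_mul_I, mul_one]

theorem statement1_general (s t n m : ℤ) (hst : IsCoprime s t) (N : ℕ) (hN : 0 < N) :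
    ∑ k ∈ Finset.range N,
      (Complex.exp (Real.pi * Complex.I * ((2 * s * t * k - n * t - m * s : ℤ) : ℂ) ^ 2
          / (2 * s * t * N))
        - Complex.exp (Real.pi * Complex.I * ((2 * s * t * k + n * t - m * s : ℤ) : ℂ) ^ 2
          / (2 * s * t * N))) = 0 := by
  have : NeZero N := ⟨hN.ne'⟩
  obtain ⟨σ, hσ⟩ := ZMod.exists_perm_mul_eq_zero (N := N) hst n m
  rw [sum_sub_distrib, sub_eq_zero, ← ZMod.sum_val_eq_sum_range, ← ZMod.sum_val_eq_sum_range]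
  refine Fintype.sum_equiv σ _ _ fun z => ?_
  obtain ⟨r, hr⟩ : (N : ℤ) ∣ (s * (z.val - (σ z).val) - n) * (t * (z.val + (σ z).val) - m) := by
    rw [← ZMod.intCast_zmod_eq_zero_iff_dvd]
    simpa using hσ z
  rw [show (2 * s * t * N : ℂ) = ((2 * s * t * N : ℤ) : ℂ) by push_cast; rfl]
  exact exp_pi_mul_I_mul_sq_div_eq_of_dvd ⟨r, by linear_combination 4 * s * t * hr⟩

theorem statement1 (s t n m : ℤ) (hs : 0 < s) (ht : 0 < t) (hst : IsCoprime s t)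
    (hn : 0 < n) (hns : n < s) (hm : 0 < m) (hmt : m < t) (N : ℕ) (hN : 0 < N) :
    ∑ k ∈ Finset.range N,
      (Complex.exp (Real.pi * Complex.I * ((2 * s * t * k - n * t - m * s : ℤ) : ℂ) ^ 2
          / (2 * s * t * N))
        - Complex.exp (Real.pi * Complex.I * ((2 * s * t * k + n * t - m * s : ℤ) : ℂ) ^ 2
          / (2 * s * t * N))) = 0 :=
  statement1_general s t n m hst N hN
end

section
/- Let s and t be coprime positive integers and n, m integers with 0 < n < s and 0 < m < t. For every positive integer N, the Laurent polynomial Σ_{c=0}^{N−1} Σ_{r=−c}^{c} ( x^{2st·r² − 2(nt+ms)r + mn} − x^{2st·r² + 2(nt−ms)r − mn} ) in ℤ[x, x⁻¹] is divisible by x^{2N} − 1. (Equivalently, 𝒥_N(q; (n,m), 2s, 2t) lies in ℤ[q^{1/2}, q^{−1/2}] after substituting x = q^{1/2}.) -/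
open Finset LaurentPolynomial

private lemma T_mul_nat_dvd (d : ℤ) (k : ℕ) :
    (T d - 1 : LaurentPolynomial ℤ) ∣ T (d * k) - 1 := by
  induction k with
  | zero => simp
  | succ k ih =>
    have h : (T (d * (k + 1 : ℕ)) - 1 : LaurentPolynomial ℤ)
        = T (d * k) * (T d - 1) + (T (d * k) - 1) := by
      have e : (d * (k + 1 : ℕ) : ℤ) = d * k + d := by push_cast; ring
      rw [e, T_add]; ring
    rw [h]
    exact dvd_add (Dvd.intro_left _ rfl) ih

private lemma T_neg_flip {d x : ℤ} (h : (T d - 1 : LaurentPolynomial ℤ) ∣ T x - 1) :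
    (T d - 1 : LaurentPolynomial ℤ) ∣ T (-x) - 1 := by
  have h1 : (T (-x) * T x : LaurentPolynomial ℤ) = 1 := by
    rw [← T_add, neg_add_cancel, T_zero]
  have key : (T (-x) - 1 : LaurentPolynomial ℤ) = -T (-x) * (T x - 1) := by
    linear_combination h1
  rw [key]
  exact Dvd.dvd.mul_left h _

private lemma T_int_dvd (d c : ℤ) : (T d - 1 : LaurentPolynomial ℤ) ∣ T (d * c) - 1 := by
  obtain ⟨k, rfl | rfl⟩ := c.eq_nat_or_neg
  · exact T_mul_nat_dvd d k
  · rw [show d * -(k : ℤ) = -(d * k) from by ring]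
    exact T_neg_flip (T_mul_nat_dvd d k)

private lemma T_dvd_of_dvd {D a b : ℤ} (h : D ∣ a - b) :
    (T D - 1 : LaurentPolynomial ℤ) ∣ T a - T b := by
  obtain ⟨c, hc⟩ := h
  have key : (T a - T b : LaurentPolynomial ℤ) = T b * (T (D * c) - 1) := by
    rw [mul_sub, mul_one, ← T_add]
    have e : b + D * c = a := by linarith
    rw [e]
  rw [key]
  exact Dvd.dvd.mul_left (T_int_dvd D c) _

private lemma exists_split (t : ℕ) : ∀ N : ℕ, 0 < N →
    ∃ N₁ N₂ k : ℕ, N₁ * N₂ = N ∧ Nat.Coprime N₁ t ∧ N₂ ∣ t ^ k := by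
  intro N
  induction N using Nat.strong_induction_on with
  | _ N ih =>
    intro hN
    by_cases h : Nat.Coprime N t
    · exact ⟨N, 1, 0, mul_one N, h, one_dvd _⟩
    · have hg0 : Nat.gcd N t ≠ 0 := by
        intro h0
        exact absurd (Nat.eq_zero_of_gcd_eq_zero_left h0) (by omega)
      have hg1 : Nat.gcd N t ≠ 1 := h
      have hg2 : 2 ≤ Nat.gcd N t := by omega
      have hgN : Nat.gcd N t ∣ N := Nat.gcd_dvd_left N t
      have hgt : Nat.gcd N t ∣ t := Nat.gcd_dvd_right N t
      have hlt : N / Nat.gcd N t < N := Nat.div_lt_self hN hg2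
      have hpos : 0 < N / Nat.gcd N t := Nat.div_pos (Nat.le_of_dvd hN hgN) (by omega)
      obtain ⟨N₁, N₂, k, hmul, hcop, hdvd⟩ := ih _ hlt hpos
      refine ⟨N₁, N₂ * Nat.gcd N t, k + 1, ?_, hcop, ?_⟩
      · rw [← mul_assoc, hmul, Nat.div_mul_cancel hgN]
      · rw [pow_succ]; exact mul_dvd_mul hdvd hgt

private lemma sum_affine_emod {M : Type*} [AddCommMonoid M] (h : ℤ → M) (N : ℕ) (hN : 0 < N)
    (a u α β : ℤ) (hbez : α * a + β * N = 1) :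
    ∑ ρ ∈ Finset.Ioc (-1 : ℤ) ((N : ℤ) - 1), h ((a * ρ + u) % N)
      = ∑ ρ ∈ Finset.Ioc (-1 : ℤ) ((N : ℤ) - 1), h ρ := by
  have hN' : (0 : ℤ) < (N : ℤ) := by exact_mod_cast hN
  have hmem : ∀ x : ℤ, x % (N : ℤ) ∈ Finset.Ioc (-1 : ℤ) ((N : ℤ) - 1) := by
    intro x
    simp only [Finset.mem_Ioc]
    have h1 := Int.emod_nonneg x (by omega : (N : ℤ) ≠ 0)
    have h2 := Int.emod_lt_of_pos x hN'
    omega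
  have hred : ∀ x y : ℤ, y ∈ Finset.Ioc (-1 : ℤ) ((N : ℤ) - 1) → (N : ℤ) ∣ x - y →
      x % (N : ℤ) = y := by
    intro x y hy hdvd
    simp only [Finset.mem_Ioc] at hy
    have h0 : (N : ℤ) ∣ x % N - y := by
      have h1 : (N : ℤ) ∣ x % N - x := ⟨-(x / N), by rw [Int.emod_def]; ring⟩
      have := dvd_add h1 hdvd
      rwa [show x % (N:ℤ) - x + (x - y) = x % N - y from by ring] at this
    have h1 := Int.emod_nonneg x (by omega : (N : ℤ) ≠ 0)
    have h2 := Int.emod_lt_of_pos x hN'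
    have h3 : x % N - y = 0 := Int.eq_zero_of_abs_lt_dvd h0 (by rw [abs_lt]; omega)
    omega
  refine Finset.sum_nbij' (fun ρ => (a * ρ + u) % N) (fun ρ => (α * (ρ - u)) % N)
    (fun ρ _ => hmem _) (fun ρ _ => hmem _) ?_ ?_ (fun ρ _ => rfl)
  · intro ρ hρ
    apply hred _ _ hρ
    have e1 : (a * ρ + u) % (N : ℤ) = a * ρ + u - N * ((a * ρ + u) / N) := Int.emod_def _ _
    refine ⟨-(α * ((a * ρ + u) / N)) - β * ρ, ?_⟩
    show α * ((a * ρ + u) % (N:ℤ) - u) - ρ = _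
    rw [e1]; linear_combination ρ * hbez
  · intro ρ hρ
    apply hred _ _ hρ
    have e1 : (α * (ρ - u)) % (N : ℤ) = α * (ρ - u) - N * ((α * (ρ - u)) / N) :=
      Int.emod_def _ _
    refine ⟨-β * (ρ - u) - a * ((α * (ρ - u)) / N), ?_⟩
    show a * ((α * (ρ - u)) % (N:ℤ)) + u - ρ = _
    rw [e1]; linear_combination (ρ - u) * hbez

theorem statement2 (s t n m : ℤ) (hs : 0 < s) (ht : 0 < t) (hst : IsCoprime s t)
    (hn : 0 < n) (hns : n < s) (hm : 0 < m) (hmt : m < t) (N : ℕ) (hN : 0 < N) :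
    (LaurentPolynomial.T (2 * N) - 1 : LaurentPolynomial ℤ) ∣
      ∑ c ∈ Finset.range N, ∑ r ∈ Finset.Icc (-(c : ℤ)) (c : ℤ),
        (LaurentPolynomial.T (2 * s * t * r ^ 2 - 2 * (n * t + m * s) * r + m * n)
          - LaurentPolynomial.T (2 * s * t * r ^ 2 + 2 * (n * t - m * s) * r - m * n)
          : LaurentPolynomial ℤ) := by
  set A : ℤ → ℤ := fun r => 2 * s * t * r ^ 2 - 2 * (n * t + m * s) * r + m * n with hA
  set B : ℤ → ℤ := fun r => 2 * s * t * r ^ 2 + 2 * (n * t - m * s) * r - m * n with hB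
  set g : ℤ → LaurentPolynomial ℤ := fun r => T (A r) - T (B r) with hg
  set P : LaurentPolynomial ℤ := T (2 * (N : ℤ)) - 1 with hP
  show P ∣ ∑ c ∈ Finset.range N, ∑ r ∈ Finset.Icc (-(c : ℤ)) (c : ℤ), g r
  have hNZ : (0 : ℤ) < (N : ℤ) := by exact_mod_cast hN
  -- periodicity of exponents
  have hAper : ∀ r r' : ℤ, (N : ℤ) ∣ r - r' → (2 * (N : ℤ)) ∣ A r - A r' := by
    rintro r r' ⟨w, hw⟩
    refine ⟨w * (s * t * (r + r') - (n * t + m * s)), ?_⟩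
    show 2 * s * t * r ^ 2 - 2 * (n * t + m * s) * r + m * n
        - (2 * s * t * r' ^ 2 - 2 * (n * t + m * s) * r' + m * n) = _
    linear_combination (2 * s * t * (r + r') - 2 * (n * t + m * s)) * hw
  have hBper : ∀ r r' : ℤ, (N : ℤ) ∣ r - r' → (2 * (N : ℤ)) ∣ B r - B r' := by
    rintro r r' ⟨w, hw⟩
    refine ⟨w * (s * t * (r + r') + (n * t - m * s)), ?_⟩
    show 2 * s * t * r ^ 2 + 2 * (n * t - m * s) * r - m * n
        - (2 * s * t * r' ^ 2 + 2 * (n * t - m * s) * r' - m * n) = _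
    linear_combination (2 * s * t * (r + r') + 2 * (n * t - m * s)) * hw
  have hgper : ∀ r r' : ℤ, (N : ℤ) ∣ r - r' → P ∣ g r - g r' := by
    intro r r' hd
    have h1 := T_dvd_of_dvd (hAper r r' hd)
    have h2 := T_dvd_of_dvd (hBper r r' hd)
    have e : g r - g r' = (T (A r) - T (A r')) - (T (B r) - T (B r')) := by
      show T (A r) - T (B r) - (T (A r') - T (B r')) = _
      ring
    rw [e]
    exact dvd_sub h1 h2
  -- arithmetic setup for the residue bijection
  obtain ⟨N₁, N₂, k, hmul, hcop12, hdvd2⟩ := exists_split t.natAbs N hN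
  have hN₁t : IsCoprime ((N₁ : ℕ) : ℤ) t := by
    have h0 := Nat.isCoprime_iff_coprime.mpr hcop12
    rwa [Int.natAbs_of_nonneg ht.le] at h0
  have hN₂tk : ((N₂ : ℕ) : ℤ) ∣ t ^ k := by
    have h0 := Int.natCast_dvd_natCast.mpr hdvd2
    push_cast at h0
    rwa [abs_of_pos ht] at h0
  have hsN₂ : IsCoprime s ((N₂ : ℕ) : ℤ) :=
    IsCoprime.of_isCoprime_of_dvd_right (hst.pow_right) hN₂tk
  have hcopN : IsCoprime ((N₁ : ℕ) : ℤ) ((N₂ : ℕ) : ℤ) :=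
    IsCoprime.of_isCoprime_of_dvd_right (hN₁t.pow_right) hN₂tk
  obtain ⟨α₁, β₁, hb1⟩ := hN₁t
  obtain ⟨γ, δ, hb2⟩ := hsN₂
  obtain ⟨ε, ζ, hb3⟩ := id hcopN
  set u₁ : ℤ := -m * β₁ with hu₁
  set u₂ : ℤ := n * γ with hu₂
  set u : ℤ := u₁ * ζ * N₂ + u₂ * ε * N₁ with hu
  set a : ℤ := ζ * N₂ - ε * N₁ with ha
  have h1a : ((N₁ : ℕ) : ℤ) ∣ 1 - a := ⟨2 * ε, by rw [ha]; linear_combination -hb3⟩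
  have h2a : ((N₂ : ℕ) : ℤ) ∣ 1 + a := ⟨2 * ζ, by rw [ha]; linear_combination -hb3⟩
  have htu1 : ((N₁ : ℕ) : ℤ) ∣ t * u₁ + m := ⟨m * α₁, by rw [hu₁]; linear_combination (-m) * hb1⟩
  have hsu2 : ((N₂ : ℕ) : ℤ) ∣ s * u₂ - n := ⟨-n * δ, by rw [hu₂]; linear_combination n * hb2⟩
  have htu : ((N₁ : ℕ) : ℤ) ∣ t * u + m := by
    have e : t * u + m = (t * u₁ + m) * (ζ * N₂) + ((t * u₂ + m) * ε) * N₁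
        + m * (1 - (ε * N₁ + ζ * N₂)) := by rw [hu]; ring
    rw [e, hb3]
    simp only [sub_self, mul_zero, add_zero]
    exact dvd_add (htu1.mul_right _) ⟨(t * u₂ + m) * ε, mul_comm _ _⟩
  have hsu : ((N₂ : ℕ) : ℤ) ∣ s * u - n := by
    have e : s * u - n = (s * u₂ - n) * (ε * N₁) + ((s * u₁ - n) * ζ) * N₂
        - n * (1 - (ε * N₁ + ζ * N₂)) := by rw [hu]; ring
    rw [e, hb3]
    simp only [sub_self, mul_zero, sub_zero]
    exact dvd_add (hsu2.mul_right _) ⟨(s * u₁ - n) * ζ, mul_comm _ _⟩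
  have hNcast : ((N : ℕ) : ℤ) = ((N₁ : ℕ) : ℤ) * ((N₂ : ℕ) : ℤ) := by exact_mod_cast hmul.symm
  have hC1 : ((N : ℕ) : ℤ) ∣ a ^ 2 - 1 := by
    rw [hNcast, show a ^ 2 - 1 = -((1 - a) * (1 + a)) from by ring]
    exact (mul_dvd_mul h1a h2a).neg_right
  have hC3 : ((N : ℕ) : ℤ) ∣ (s * u - n) * (t * u + m) := by
    rw [hNcast, mul_comm ((N₁ : ℕ) : ℤ)]
    exact mul_dvd_mul hsu htu
  have hC2 : ((N : ℕ) : ℤ) ∣ 2 * s * t * a * u - (n * t - m * s) * a + (n * t + m * s) := by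
    rw [hNcast]
    apply IsCoprime.mul_dvd hcopN
    · have e : 2 * s * t * a * u - (n * t - m * s) * a + (n * t + m * s)
          = 2 * s * a * (t * u + m) + (n * t + m * s) * (1 - a) := by ring
      rw [e]
      exact dvd_add (htu.mul_left _) (h1a.mul_left _)
    · have e : 2 * s * t * a * u - (n * t - m * s) * a + (n * t + m * s)
          = 2 * t * a * (s * u - n) + (n * t + m * s) * (1 + a) := by ring
      rw [e]
      exact dvd_add (hsu.mul_left _) (h2a.mul_left _)
  have hkey : ∀ ρ : ℤ, (2 * (N : ℤ)) ∣ A ρ - B (-a * ρ + -u) := by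
    intro ρ
    obtain ⟨w1, e1⟩ := hC1
    obtain ⟨w2, e2⟩ := hC2
    obtain ⟨w3, e3⟩ := hC3
    refine ⟨-(s * t * ρ ^ 2 * w1 + ρ * w2 + w3), ?_⟩
    show 2 * s * t * ρ ^ 2 - 2 * (n * t + m * s) * ρ + m * n
        - (2 * s * t * (-a * ρ + -u) ^ 2 + 2 * (n * t - m * s) * (-a * ρ + -u) - m * n) = _
    linear_combination (-2 * s * t * ρ ^ 2) * e1 + (-2 * ρ) * e2 + (-2) * e3
  -- coprimality of -a and N, for the bijection
  have haN : IsCoprime (-a) ((N : ℕ) : ℤ) := by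
    apply IsCoprime.neg_left
    rw [hNcast]
    apply IsCoprime.mul_right
    · obtain ⟨w, hw⟩ := h1a
      exact ⟨1, w, by linarith⟩
    · obtain ⟨w, hw⟩ := h2a
      exact ⟨-1, w, by linarith⟩
  obtain ⟨α', β', hbez'⟩ := haN
  -- the key divisibility for the constant inner sum
  have h2 : P ∣ ∑ r ∈ Finset.Ioc (-1 : ℤ) ((N : ℤ) - 1), g r := by
    have hb := sum_affine_emod (fun x => T (B x) : ℤ → LaurentPolynomial ℤ) N hN
      (-a) (-u) α' β' hbez'
    have hsum : ∑ r ∈ Finset.Ioc (-1 : ℤ) ((N : ℤ) - 1), g r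
        = ∑ ρ ∈ Finset.Ioc (-1 : ℤ) ((N : ℤ) - 1),
            (T (A ρ) - T (B ((-a * ρ + -u) % (N : ℤ)))) := by
      rw [Finset.sum_sub_distrib, Finset.sum_sub_distrib, ← hb]
    rw [hsum]
    refine Finset.dvd_sum ?_
    intro ρ _
    apply T_dvd_of_dvd
    have hp : (N : ℤ) ∣ (-a * ρ + -u) % (N : ℤ) - (-a * ρ + -u) :=
      ⟨-((-a * ρ + -u) / N), by rw [Int.emod_def]; ring⟩
    have hB2 := hBper _ _ hp
    have e : A ρ - B ((-a * ρ + -u) % (N : ℤ))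
        = (A ρ - B (-a * ρ + -u)) - (B ((-a * ρ + -u) % (N : ℤ)) - B (-a * ρ + -u)) := by
      ring
    rw [e]
    exact dvd_sub (hkey ρ) hB2
  -- combinatorial reduction of the double sum
  have hsplit : ∀ c : ℕ, ∑ r ∈ Finset.Icc (-(c : ℤ)) (c : ℤ), g r
      = (∑ r ∈ Finset.Ioc (-(c : ℤ) - 1) (-1 : ℤ), g r)
        + ∑ r ∈ Finset.Ioc (-1 : ℤ) (c : ℤ), g r := by
    intro c
    have e1 : Finset.Icc (-(c : ℤ)) (c : ℤ) = Finset.Ioc (-(c : ℤ) - 1) (c : ℤ) := by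
      ext x
      simp only [Finset.mem_Icc, Finset.mem_Ioc]
      omega
    have e2 : Finset.Ioc (-(c : ℤ) - 1) (c : ℤ)
        = Finset.Ioc (-(c : ℤ) - 1) (-1 : ℤ) ∪ Finset.Ioc (-1 : ℤ) (c : ℤ) :=
      (Finset.Ioc_union_Ioc_eq_Ioc (by omega) (by omega)).symm
    have hdisj : Disjoint (Finset.Ioc (-(c : ℤ) - 1) (-1 : ℤ)) (Finset.Ioc (-1 : ℤ) (c : ℤ)) := by
      rw [Finset.disjoint_left]
      intro x hx hx'
      simp only [Finset.mem_Ioc] at hx hx'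
      omega
    rw [e1, e2, Finset.sum_union hdisj]
  have hshiftmap : ∀ c : ℕ, ∑ r ∈ Finset.Ioc ((N : ℤ) - (c : ℤ) - 1) ((N : ℤ) - 1), g r
      = ∑ r ∈ Finset.Ioc (-(c : ℤ) - 1) (-1 : ℤ), g (r + N) := by
    intro c
    refine (Finset.sum_nbij' (fun r => r + (N : ℤ)) (fun r => r - (N : ℤ)) ?_ ?_ ?_ ?_
      (fun r _ => rfl)).symm
    · intro r hr
      simp only [Finset.mem_Ioc] at hr ⊢
      omega
    · intro r hr
      simp only [Finset.mem_Ioc] at hr ⊢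
      omega
    · intro r _
      show r + (N : ℤ) - (N : ℤ) = r
      ring
    · intro r _
      show r - (N : ℤ) + (N : ℤ) = r
      ring
  have hshift : ∀ c : ℕ, P ∣ (∑ r ∈ Finset.Ioc (-(c : ℤ) - 1) (-1 : ℤ), g r)
      - ∑ r ∈ Finset.Ioc ((N : ℤ) - (c : ℤ) - 1) ((N : ℤ) - 1), g r := by
    intro c
    rw [hshiftmap c, ← Finset.sum_sub_distrib]
    exact Finset.dvd_sum fun r _ => hgper r (r + N) ⟨-1, by ring⟩
  have hS : ∑ c ∈ Finset.range N, ∑ r ∈ Finset.Icc (-(c : ℤ)) (c : ℤ), g r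
      = (∑ c ∈ Finset.range N, ((∑ r ∈ Finset.Ioc (-(c : ℤ) - 1) (-1 : ℤ), g r)
            - ∑ r ∈ Finset.Ioc ((N : ℤ) - (c : ℤ) - 1) ((N : ℤ) - 1), g r))
        + ∑ c ∈ Finset.range N, ((∑ r ∈ Finset.Ioc ((N : ℤ) - (c : ℤ) - 1) ((N : ℤ) - 1), g r)
            + ∑ r ∈ Finset.Ioc (-1 : ℤ) (c : ℤ), g r) := by
    rw [← Finset.sum_add_distrib]
    refine Finset.sum_congr rfl fun c _ => ?_
    rw [hsplit c]
    ring
  rw [hS]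
  refine dvd_add (Finset.dvd_sum fun c _ => hshift c) ?_
  have hrefl : ∑ c ∈ Finset.range N,
        ((∑ r ∈ Finset.Ioc ((N : ℤ) - (c : ℤ) - 1) ((N : ℤ) - 1), g r)
          + ∑ r ∈ Finset.Ioc (-1 : ℤ) (c : ℤ), g r)
      = ∑ c ∈ Finset.range N,
        ((∑ r ∈ Finset.Ioc (c : ℤ) ((N : ℤ) - 1), g r)
          + ∑ r ∈ Finset.Ioc (-1 : ℤ) (c : ℤ), g r) := by
    rw [Finset.sum_add_distrib, Finset.sum_add_distrib]
    congr 1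
    have hre := Finset.sum_range_reflect
      (fun c : ℕ => ∑ r ∈ Finset.Ioc ((N : ℤ) - (c : ℤ) - 1) ((N : ℤ) - 1), g r) N
    rw [← hre]
    refine Finset.sum_congr rfl fun c hc => ?_
    have hc' : c < N := Finset.mem_range.mp hc
    have e : (N : ℤ) - ((N - 1 - c : ℕ) : ℤ) - 1 = (c : ℤ) := by omega
    rw [e]
  rw [hrefl]
  refine Finset.dvd_sum fun c hc => ?_
  have hc' : c < N := Finset.mem_range.mp hc
  have hcomb : (∑ r ∈ Finset.Ioc (c : ℤ) ((N : ℤ) - 1), g r)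
      + ∑ r ∈ Finset.Ioc (-1 : ℤ) (c : ℤ), g r
      = ∑ r ∈ Finset.Ioc (-1 : ℤ) ((N : ℤ) - 1), g r := by
    have e2 : Finset.Ioc (-1 : ℤ) ((N : ℤ) - 1)
        = Finset.Ioc (-1 : ℤ) (c : ℤ) ∪ Finset.Ioc (c : ℤ) ((N : ℤ) - 1) :=
      (Finset.Ioc_union_Ioc_eq_Ioc (by omega) (by omega)).symm
    have hdisj : Disjoint (Finset.Ioc (-1 : ℤ) (c : ℤ)) (Finset.Ioc (c : ℤ) ((N : ℤ) - 1)) := by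
      rw [Finset.disjoint_left]
      intro x hx hx'
      simp only [Finset.mem_Ioc] at hx hx'
      omega
    rw [e2, Finset.sum_union hdisj]
    ring
  rw [hcomb]
  exact h2
end

section
/- Let s and t be coprime positive integers and n, m integers with 0 < n < s and 0 < m < t. For every τ ∈ ℂ with Im τ > 0 (writing q^x := exp(2πiτx)), Σ_{k∈ℤ} |k| ( q^{(2stk−nt−ms)²/(4st)} − q^{(2stk−nt+ms)²/(4st)} ) = (1/(st)) · ( Φ̃(τ) + ((nt−ms)/2)·Ψ̃^{(nt−ms)}(τ) − ((nt+ms)/2)·Ψ̃^{(nt+ms)}(τ) ), where Φ̃(τ) := −(1/2) Σ_{k=0}^{∞} k·χ(k)·q^{k²/(4st)} and Ψ̃^{(a)}(τ) := Σ_{k=0}^{∞} ψ_{2st}^{(a)}(k)·q^{k²/(4st)}. -/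
open Complex Finset

/-- `Q τ x = q^x = exp(2πiτx)` for real `x`. -/
noncomputable def Q (τ : ℂ) (x : ℝ) : ℂ := Complex.exp (2 * Real.pi * Complex.I * τ * x)

/-- The 2st-periodic function `χ_{2st}^{(n,m)}`. -/
def chi (s t n m k : ℤ) : ℤ :=
  if k ≡ n * t - m * s [ZMOD 2 * s * t] ∨ k ≡ -(n * t - m * s) [ZMOD 2 * s * t] then 1
  else if k ≡ n * t + m * s [ZMOD 2 * s * t] ∨ k ≡ -(n * t + m * s) [ZMOD 2 * s * t] then -1
  else 0

/-- The 2st-periodic function `ψ_{2st}^{(a)}` (with modulus `M = 2st`). -/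
def psi (M a k : ℤ) : ℤ :=
  if k ≡ a [ZMOD M] then 1 else if k ≡ -a [ZMOD M] then -1 else 0

/-- The Eichler integral `Φ̃_{s,t}^{(n,m)}(τ)`. -/
noncomputable def PhiT (s t n m : ℤ) (τ : ℂ) : ℂ :=
  -(1 / 2) * ∑' k : ℕ, (k : ℂ) * (chi s t n m k : ℂ) * Q τ ((k : ℝ) ^ 2 / (4 * s * t))

/-- The Eichler integral `Ψ̃_{st}^{(a)}(τ)`. -/
noncomputable def PsiT (s t a : ℤ) (τ : ℂ) : ℂ :=
  ∑' k : ℕ, (psi (2 * s * t) a k : ℂ) * Q τ ((k : ℝ) ^ 2 / (4 * s * t))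

/-!
With `a = nt - ms`, `b = nt + ms` and `M = 2st`, the substitution `j = |Mk - c|` (`c = a, b`)
maps `ℤ` injectively onto the `j ≡ ±c (mod M)`, and there `M|k| = j ψ(j)² - c ψ(j)` with
`ψ = ψ_M^{(c)}`. So each half of the left side is a combination of the series
`∑ j ψ(j)² q^{j²/4st}` and `∑ ψ(j) q^{j²/4st}`; since the classes `±a`, `±b` are disjoint,
`χ = ψ^{(a)}² - ψ^{(b)}²`, and the right side is the same combination.
-/

lemma norm_Q (τ : ℂ) (x : ℝ) : ‖Q τ x‖ = Real.exp (-(2 * Real.pi * τ.im * x)) := by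
  rw [Q, Complex.norm_exp]
  congr 1
  simp [Complex.mul_re, Complex.mul_im]

lemma summable_mul_Q_sq {τ : ℂ} (hτ : 0 < τ.im) {d : ℝ} (hd : 0 < d) {u : ℕ → ℂ}
    (hu : ∀ j, ‖u j‖ ≤ j + 1) : Summable (fun j : ℕ => u j * Q τ ((j : ℝ) ^ 2 / d)) := by
  set r := Real.exp (-(2 * Real.pi * τ.im / d))
  have hr : ‖r‖ < 1 := by
    rw [Real.norm_of_nonneg (Real.exp_pos _).le, Real.exp_lt_one_iff]
    have := Real.pi_pos
    simp only [Left.neg_neg_iff]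
    positivity
  have hgeom : Summable (fun j : ℕ => ((j : ℝ) + 1) * r ^ j) := by
    simpa [add_mul] using (summable_pow_mul_geometric_of_norm_lt_one 1 hr).add
      (summable_geometric_of_norm_lt_one hr)
  refine .of_norm_bounded hgeom fun j => ?_
  rw [norm_mul, norm_Q, ← Real.exp_nat_mul]
  gcongr
  · exact hu j
  · have hj : (j : ℝ) ≤ (j : ℝ) ^ 2 := by
      rcases Nat.eq_zero_or_pos j with rfl | h
      · simp
      · nlinarith [show (1 : ℝ) ≤ j by exact_mod_cast h]
    have hε : 0 ≤ 2 * Real.pi * τ.im / d := by positivity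
    have : 2 * Real.pi * τ.im * ((j : ℝ) ^ 2 / d) = 2 * Real.pi * τ.im / d * (j : ℝ) ^ 2 := by
      ring
    nlinarith [mul_le_mul_of_nonneg_left hj hε]

lemma norm_psi_le_one (M a k : ℤ) : ‖(psi M a k : ℂ)‖ ≤ 1 := by
  unfold psi
  split_ifs <;> simp

lemma summable_natCast_mul_psi_sq_mul_Q {τ : ℂ} (hτ : 0 < τ.im) {d : ℝ} (hd : 0 < d) (M c : ℤ) :
    Summable fun j : ℕ => (j : ℂ) * (psi M c j : ℂ) ^ 2 * Q τ ((j : ℝ) ^ 2 / d) := by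
  refine summable_mul_Q_sq hτ hd fun j => ?_
  rw [norm_mul, norm_pow, Complex.norm_natCast]
  have := pow_le_one₀ (n := 2) (norm_nonneg _) (norm_psi_le_one M c j)
  nlinarith [j.cast_nonneg (α := ℝ)]

lemma summable_psi_mul_Q {τ : ℂ} (hτ : 0 < τ.im) {d : ℝ} (hd : 0 < d) (M c : ℤ) :
    Summable fun j : ℕ => (psi M c j : ℂ) * Q τ ((j : ℝ) ^ 2 / d) :=
  summable_mul_Q_sq hτ hd fun j => (norm_psi_le_one M c j).trans (by simp)

lemma psi_sq (M a k : ℤ) :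
    psi M a k ^ 2 = if k ≡ a [ZMOD M] ∨ k ≡ -a [ZMOD M] then 1 else 0 := by
  unfold psi
  split_ifs <;> simp_all

lemma chi_eq_psi_sq_sub_psi_sq {s t n m : ℤ}
    (h₁ : ¬ n * t - m * s ≡ n * t + m * s [ZMOD 2 * s * t])
    (h₂ : ¬ n * t - m * s ≡ -(n * t + m * s) [ZMOD 2 * s * t]) (k : ℤ) :
    chi s t n m k =
      psi (2 * s * t) (n * t - m * s) k ^ 2 - psi (2 * s * t) (n * t + m * s) k ^ 2 := by
  rw [chi, psi_sq, psi_sq]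
  split_ifs with ha hb <;> try rfl
  rcases ha with ha | ha <;> rcases hb with hb | hb
  · exact absurd (ha.symm.trans hb) h₁
  · exact absurd (ha.symm.trans hb) h₂
  · exact absurd (by simpa using (ha.symm.trans hb).neg) h₂
  · exact absurd (by simpa using (ha.symm.trans hb).neg) h₁

section Reindex

variable {M c : ℤ}

lemma exists_natAbs_mul_sub_eq {j : ℕ} (hj : psi M c j ≠ 0) :
    ∃ k : ℤ, (M * k - c).natAbs = j := by
  unfold psi at hj
  split_ifs at hj with h₁ h₂
  · obtain ⟨k, hk⟩ := h₁.dvd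
    exact ⟨k, by rw [show M * k - c = -j by linarith]; simp⟩
  · obtain ⟨k, hk⟩ := h₂.dvd
    exact ⟨-k, by rw [show M * -k - c = j by linarith]; simp⟩
  · exact absurd rfl hj

lemma natAbs_mul_sub_injective (hM : 0 < M) (hc : ¬ M ∣ 2 * c) :
    Function.Injective fun k : ℤ => (M * k - c).natAbs := by
  intro k k' h
  rcases Int.natAbs_eq_natAbs_iff.mp h with h | h
  · exact mul_left_cancel₀ hM.ne' (by linarith)
  · exact absurd ⟨k + k', by linarith⟩ hc

lemma natAbs_mul_sub_mul_psi (hM : 0 < M) (hc : ¬ M ∣ 2 * c) (hcM : |c| < M) (k : ℤ) :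
    (M * k - c).natAbs * psi M c (M * k - c).natAbs ^ 2 - c * psi M c (M * k - c).natAbs
      = M * |k| := by
  set j := (M * k - c).natAbs
  obtain ⟨hc₁, hc₂⟩ := abs_lt.mp hcM
  rcases le_or_gt c (M * k) with h | h
  · have hj : (j : ℤ) = M * k - c := by
      rw [Int.natCast_natAbs, abs_of_nonneg (by linarith)]
    have hψ : psi M c j = -1 := by
      have h₁ : ¬ (j : ℤ) ≡ c [ZMOD M] := fun h' => by
        obtain ⟨e, he⟩ := h'.dvd
        exact hc ⟨e + k, by rw [hj] at he; rw [mul_add]; linarith⟩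
      rw [psi, if_neg h₁, if_pos (Int.modEq_iff_dvd.mpr ⟨-k, by rw [hj]; ring⟩)]
    have hk : 0 ≤ k := by nlinarith
    rw [hψ, hj, abs_of_nonneg hk]
    ring
  · have hj : (j : ℤ) = c - M * k := by
      rw [Int.natCast_natAbs, abs_of_neg (by linarith)]
      ring
    have hψ : psi M c j = 1 := by
      rw [psi, if_pos (Int.modEq_iff_dvd.mpr ⟨k, by rw [hj]; ring⟩)]
    have hk : k ≤ 0 := by nlinarith
    rw [hψ, hj, abs_of_nonpos hk]
    ring

lemma hasSum_abs_mul_natAbs (hM : 0 < M) (hc : ¬ M ∣ 2 * c) (hcM : |c| < M) {f : ℕ → ℂ}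
    {S : ℂ} (h : HasSum (fun j : ℕ => ((j * psi M c j ^ 2 - c * psi M c j : ℤ) : ℂ) * f j) S) :
    HasSum (fun k : ℤ => ((|k| : ℤ) : ℂ) * f (M * k - c).natAbs) (S / M) := by
  have hsupp : ∀ j ∉ Set.range fun k : ℤ => (M * k - c).natAbs,
      ((j * psi M c j ^ 2 - c * psi M c j : ℤ) : ℂ) * f j = 0 := by
    intro j hj
    have : psi M c j = 0 := by_contra fun h₀ => hj (exists_natAbs_mul_sub_eq h₀)
    simp [this]
  have hMC : (M : ℂ) ≠ 0 := by exact_mod_cast hM.ne'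
  have hcomp := ((natAbs_mul_sub_injective hM hc).hasSum_iff hsupp).mpr h
  refine (hcomp.div_const (M : ℂ)).congr_fun fun k => ?_
  rw [Function.comp_apply, natAbs_mul_sub_mul_psi hM hc hcM k]
  push_cast
  field_simp

lemma hasSum_abs_mul_Q_sq {τ : ℂ} (hτ : 0 < τ.im) {d : ℝ} (hd : 0 < d) (hM : 0 < M)
    (hc : ¬ M ∣ 2 * c) (hcM : |c| < M) :
    HasSum (fun k : ℤ => ((|k| : ℤ) : ℂ) * Q τ (((M * k - c : ℤ) : ℝ) ^ 2 / d))
      ((∑' j : ℕ, (j : ℂ) * (psi M c j : ℂ) ^ 2 * Q τ ((j : ℝ) ^ 2 / d)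
        - c * ∑' j : ℕ, (psi M c j : ℂ) * Q τ ((j : ℝ) ^ 2 / d)) / M) := by
  convert hasSum_abs_mul_natAbs hM hc hcM (f := fun j => Q τ ((j : ℝ) ^ 2 / d))
    (((summable_natCast_mul_psi_sq_mul_Q hτ hd M c).hasSum.sub
      ((summable_psi_mul_Q hτ hd M c).hasSum.mul_left (c : ℂ))).congr_fun ?_) using 3 with k
  · rw [Nat.cast_natAbs, Int.cast_abs, sq_abs]
  · intro j
    push_cast
    ring

end Reindex

lemma not_dvd_two_mul_add {s t n : ℤ} (hst : IsCoprime s t) (hn : 0 < n) (hns : n < s)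
    (x : ℤ) : ¬ 2 * s * t ∣ 2 * (n * t + s * x) := by
  intro h
  rw [mul_assoc, mul_dvd_mul_iff_left two_ne_zero] at h
  have hs : s ∣ n * t := (dvd_add_left (dvd_mul_right s x)).mp ((dvd_mul_right s t).trans h)
  exact absurd (Int.le_of_dvd hn (hst.dvd_of_dvd_mul_right hs)) (not_le.mpr hns)

theorem statement6 (s t n m : ℤ) (hs : 0 < s) (ht : 0 < t) (hst : IsCoprime s t)
    (hn : 0 < n) (hns : n < s) (hm : 0 < m) (hmt : m < t)
    (τ : ℂ) (hτ : 0 < τ.im) :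
    ∑' k : ℤ, ((|k| : ℤ) : ℂ) *
        (Q τ (((2 * s * t * k - n * t - m * s : ℤ) : ℝ) ^ 2 / (4 * s * t))
          - Q τ (((2 * s * t * k - n * t + m * s : ℤ) : ℝ) ^ 2 / (4 * s * t))) =
      (1 / (s * t : ℂ)) *
        (PhiT s t n m τ + ((n * t - m * s : ℤ) : ℂ) / 2 * PsiT s t (n * t - m * s) τ
          - ((n * t + m * s : ℤ) : ℂ) / 2 * PsiT s t (n * t + m * s) τ) := by
  have hM : 0 < 2 * s * t := by positivity
  have hd : (0 : ℝ) < 4 * s * t := by positivity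
  have ha : ¬ 2 * s * t ∣ 2 * (n * t - m * s) := by
    convert not_dvd_two_mul_add hst hn hns (-m) using 2; ring
  have hb : ¬ 2 * s * t ∣ 2 * (n * t + m * s) := by
    convert not_dvd_two_mul_add hst hn hns m using 2; ring
  have hab : ¬ n * t - m * s ≡ n * t + m * s [ZMOD 2 * s * t] := fun h =>
    not_dvd_two_mul_add hst.symm hm hmt 0 (by convert h.dvd using 1 <;> ring)
  have hab' : ¬ n * t - m * s ≡ -(n * t + m * s) [ZMOD 2 * s * t] := fun h => by
    refine not_dvd_two_mul_add hst hn hns 0 ?_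
    rw [show 2 * (n * t + s * 0) = -(-(n * t + m * s) - (n * t - m * s)) by ring]
    exact h.dvd.neg_right
  have hA := hasSum_abs_mul_Q_sq hτ hd hM ha (abs_lt.mpr ⟨by nlinarith, by nlinarith⟩)
  have hB := hasSum_abs_mul_Q_sq hτ hd hM hb (abs_lt.mpr ⟨by nlinarith, by nlinarith⟩)
  have hPhi : ∑' j : ℕ, (j : ℂ) * (chi s t n m j : ℂ) * Q τ ((j : ℝ) ^ 2 / (4 * s * t)) =
      ∑' j : ℕ, (j : ℂ) * (psi (2 * s * t) (n * t - m * s) j : ℂ) ^ 2 *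
          Q τ ((j : ℝ) ^ 2 / (4 * s * t))
        - ∑' j : ℕ, (j : ℂ) * (psi (2 * s * t) (n * t + m * s) j : ℂ) ^ 2 *
          Q τ ((j : ℝ) ^ 2 / (4 * s * t)) := by
    rw [← (summable_natCast_mul_psi_sq_mul_Q hτ hd _ _).tsum_sub
      (summable_natCast_mul_psi_sq_mul_Q hτ hd _ _)]
    refine tsum_congr fun j => ?_
    rw [chi_eq_psi_sq_sub_psi_sq hab hab']
    push_cast
    ring
  simp only [mul_sub, sub_sub, sub_add]
  rw [(hB.sub hA).tsum_eq, PhiT, PsiT, PsiT, hPhi]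
  have : (s : ℂ) ≠ 0 := by exact_mod_cast hs.ne'
  have : (t : ℂ) ≠ 0 := by exact_mod_cast ht.ne'
  push_cast
  field_simp
  ring
end
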